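/- arXiv:2105.00625 — 2 statements merged into one kernel-verified Lean document; each statement's English description precedes it below -/
import Mathlib

section
/- If α < β, then there exists exactly one index ℓ ∈ {0,…,k−1} such that m_ℓ = 0. -/
/-! `m ℓ` vanishes iff the two concatenations agree. As `s ℓ, w ℓ < b ^ d`, this splits into
`w ℓ = s ℓ`, i.e. `b ^ d ∣ b ^ (d - α ℓ - 1 + β ℓ)`, i.e. `α ℓ < β ℓ`, and agreement of the base-`d`
digits of `α` and `β` above position `ℓ`. Since `α < β`, exactly one position has both properties:
the most significant one at which the digits of `α` and `β` differ. -/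

open Finset

theorem Nat.add_mul_eq_add_mul_iff_of_lt {a a' c x y : ℕ} (ha : a < c) (ha' : a' < c) :
    a + c * x = a' + c * y ↔ a = a' ∧ x = y := by
  refine ⟨fun h => ?_, by rintro ⟨rfl, rfl⟩; rfl⟩
  have hc : 0 < c := by omega
  obtain ⟨hdiv, hmod⟩ := (Nat.div_mod_unique hc).2 ⟨h, ha⟩
  obtain ⟨hdiv', hmod'⟩ := (Nat.div_mod_unique hc).2 ⟨rfl, ha'⟩
  exact ⟨hmod.symm.trans hmod', hdiv.symm.trans hdiv'⟩

theorem Nat.pow_add_mod_pow_eq_self_iff {b d e s : ℕ} (hb : 1 < b) (hs : s < b ^ d) :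
    (b ^ e + s) % b ^ d = s ↔ d ≤ e := by
  conv_lhs => rhs; rw [← Nat.mod_eq_of_lt hs]
  exact Nat.add_modEq_right_iff.trans (Nat.pow_dvd_pow_iff_le_right hb)

section Digits

variable {d n : ℕ} {f g : ℕ → ℕ}

theorem sum_range_mul_pow_lt (hf : ∀ i < n, f i < d) : ∑ i ∈ range n, f i * d ^ i < d ^ n := by
  induction n with
  | zero => simp
  | succ n ih =>
    have hlow := ih fun i hi => hf i (by omega)
    have htop : (f n + 1) * d ^ n ≤ d * d ^ n := Nat.mul_le_mul_right _ (hf n n.lt_add_one)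
    rw [sum_range_succ, pow_succ]
    linarith

theorem sum_range_mul_pow_eq_iff (hf : ∀ i < n, f i < d) (hg : ∀ i < n, g i < d) :
    ∑ i ∈ range n, f i * d ^ i = ∑ i ∈ range n, g i * d ^ i ↔ ∀ i < n, f i = g i := by
  refine ⟨fun h => ?_, fun h => sum_congr rfl fun i hi => by rw [h i (mem_range.1 hi)]⟩
  induction n with
  | zero => simp
  | succ n ih =>
    rw [sum_range_succ, sum_range_succ, mul_comm (f n), mul_comm (g n),
      Nat.add_mul_eq_add_mul_iff_of_lt (sum_range_mul_pow_lt fun i hi => hf i (by omega))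
        (sum_range_mul_pow_lt fun i hi => hg i (by omega))] at h
    intro i hi
    rcases Nat.lt_succ_iff_lt_or_eq.1 hi with hi | rfl
    · exact ih (fun i hi => hf i (by omega)) (fun i hi => hg i (by omega)) h.1 i hi
    · exact h.2

theorem sum_Ico_mul_pow_sub_eq_iff {j k : ℕ} (hf : ∀ i < k, f i < d) (hg : ∀ i < k, g i < d) :
    ∑ u ∈ Ico j k, f u * d ^ (u - j) = ∑ u ∈ Ico j k, g u * d ^ (u - j) ↔
      ∀ u, j ≤ u → u < k → f u = g u := by
  simp only [sum_Ico_eq_sum_range, Nat.add_sub_cancel_left]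
  rw [sum_range_mul_pow_eq_iff (fun i hi => hf _ (by omega)) (fun i hi => hg _ (by omega))]
  refine ⟨fun h u hju huk => ?_, fun h i hi => h _ (by omega) (by omega)⟩
  simpa [Nat.add_sub_cancel' hju] using h (u - j) (by omega)

theorem exists_lt_and_eq_above_of_sum_lt (hg : ∀ i < n, g i < d)
    (h : ∑ i ∈ range n, f i * d ^ i < ∑ i ∈ range n, g i * d ^ i) :
    ∃ ℓ < n, f ℓ < g ℓ ∧ ∀ u, ℓ < u → u < n → f u = g u := by
  induction n with
  | zero => simp at h
  | succ n ih =>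
    rw [sum_range_succ, sum_range_succ] at h
    rcases lt_trichotomy (f n) (g n) with hlt | heq | hgt
    · exact ⟨n, n.lt_add_one, hlt, fun u hu hu' => by omega⟩
    · obtain ⟨ℓ, hℓ, hfg, habove⟩ := ih (fun i hi => hg i (by omega)) (by rw [heq] at h; omega)
      refine ⟨ℓ, by omega, hfg, fun u hu hu' => ?_⟩
      rcases Nat.lt_succ_iff_lt_or_eq.1 hu' with hu' | rfl
      exacts [habove u hu hu', heq]
    · have hlow := sum_range_mul_pow_lt (n := n) fun i hi => hg i (by omega)
      have htop : (g n + 1) * d ^ n ≤ f n * d ^ n := Nat.mul_le_mul_right _ hgt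
      rw [add_one_mul] at htop
      omega

theorem existsUnique_lt_and_eq_above (hg : ∀ i < n, g i < d)
    (h : ∑ i ∈ range n, f i * d ^ i < ∑ i ∈ range n, g i * d ^ i) :
    ∃! ℓ, ℓ < n ∧ f ℓ < g ℓ ∧ ∀ u, ℓ < u → u < n → f u = g u := by
  obtain ⟨ℓ, hℓ, hfg, habove⟩ := exists_lt_and_eq_above_of_sum_lt hg h
  refine ⟨ℓ, ⟨hℓ, hfg, habove⟩, fun ℓ' ⟨hℓ', hfg', habove'⟩ => ?_⟩
  rcases lt_trichotomy ℓ' ℓ with hlt | rfl | hgt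
  · exact absurd (habove' ℓ hlt hℓ) hfg.ne
  · rfl
  · exact absurd (habove ℓ' hgt hℓ') hfg'.ne

end Digits

theorem unique_zero_when_lt_general
    (b d k : ℕ) (hb : 2 ≤ b)
    (α β : ℕ → ℕ) (hα : ∀ i < k, α i < d) (hβ : ∀ i < k, β i < d)
    (s : ℕ → ℕ) (hs : ∀ ℓ < k, 1 ≤ s ℓ ∧ s ℓ < b ^ d ∧ ¬ b ∣ s ℓ)
    (w : ℕ → ℕ) (hw : ∀ ℓ, w ℓ = (b ^ (d - α ℓ - 1 + β ℓ) + s ℓ) % b ^ d)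
    (r r' : ℕ → ℤ) (hr : ∀ ℓ, r ℓ ≠ 0) (hr' : ∀ ℓ, r' ℓ ≠ 0)
    (m : ℕ → ℤ)
    (hm : ∀ ℓ, m ℓ = r ℓ * r' ℓ *
      (((s ℓ + b ^ d * ∑ u ∈ Finset.Ico (ℓ + 1) k, β u * d ^ (u - (ℓ + 1)) : ℕ) : ℤ) -
       ((w ℓ + b ^ d * ∑ u ∈ Finset.Ico (ℓ + 1) k, α u * d ^ (u - (ℓ + 1)) : ℕ) : ℤ)))
    (hlt : (∑ i ∈ Finset.range k, α i * d ^ i) < (∑ i ∈ Finset.range k, β i * d ^ i)) :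
    ∃! ℓ, ℓ < k ∧ m ℓ = 0 := by
  have hzero : ∀ ℓ < k, m ℓ = 0 ↔ α ℓ < β ℓ ∧ ∀ u, ℓ < u → u < k → α u = β u := by
    intro ℓ hℓ
    have hs_lt : s ℓ < b ^ d := (hs ℓ hℓ).2.1
    have hw_lt : w ℓ < b ^ d := hw ℓ ▸ Nat.mod_lt _ (by positivity)
    rw [hm ℓ, mul_eq_zero, or_iff_right (mul_ne_zero (hr ℓ) (hr' ℓ)), sub_eq_zero, Nat.cast_inj,
      Nat.add_mul_eq_add_mul_iff_of_lt hs_lt hw_lt, eq_comm, hw ℓ,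
      Nat.pow_add_mod_pow_eq_self_iff (by omega) hs_lt, eq_comm, sum_Ico_mul_pow_sub_eq_iff hα hβ]
    have := hβ ℓ hℓ
    exact and_congr_left' (by omega)
  rw [existsUnique_congr fun ℓ => and_congr_right (hzero ℓ)]
  exact existsUnique_lt_and_eq_above hβ hlt

/-- if `α < β` then there is exactly one index `ℓ ∈ {0,…,k−1}` with
`m_ℓ = 0`, where `m_ℓ = r_ℓ · r_ℓ' · (concat_ℓ(β, s_ℓ) − concat_ℓ(α, w_ℓ))`. -/
theorem unique_zero_when_lt
    (b d k : ℕ) (hb : 2 ≤ b) (hd : 2 ≤ d) (hk : 1 ≤ k)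
    (α β : ℕ → ℕ) (hα : ∀ i < k, α i < d) (hβ : ∀ i < k, β i < d)
    (s : ℕ → ℕ) (hs : ∀ ℓ < k, 1 ≤ s ℓ ∧ s ℓ < b ^ d ∧ ¬ b ∣ s ℓ)
    (w : ℕ → ℕ) (hw : ∀ ℓ, w ℓ = (b ^ (d - α ℓ - 1 + β ℓ) + s ℓ) % b ^ d)
    (r r' : ℕ → ℤ) (hr : ∀ ℓ, r ℓ ≠ 0) (hr' : ∀ ℓ, r' ℓ ≠ 0)
    (m : ℕ → ℤ)
    (hm : ∀ ℓ, m ℓ = r ℓ * r' ℓ *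
      (((s ℓ + b ^ d * ∑ u ∈ Finset.Ico (ℓ + 1) k, β u * d ^ (u - (ℓ + 1)) : ℕ) : ℤ) -
       ((w ℓ + b ^ d * ∑ u ∈ Finset.Ico (ℓ + 1) k, α u * d ^ (u - (ℓ + 1)) : ℕ) : ℤ)))
    (hlt : (∑ i ∈ Finset.range k, α i * d ^ i) < (∑ i ∈ Finset.range k, β i * d ^ i)) :
    ∃! ℓ, ℓ < k ∧ m ℓ = 0 :=
  unique_zero_when_lt_general b d k hb α β hα hβ s hs w hw r r' hr hr' m hm hlt
end

section
/- Fix a bit b and sample a : Fin ι → Bool uniformly at random; define the plaintext vector e : Fin ι → Bool of the AND-embedding by e i = false if a i = true, and e i = ¬b if a i = false. Then the probability that the AND-decryption result (∀ i, e i = false) equals b is at least 1 − (1/2)^ι; it equals 1 when b = true and equals 1 − (1/2)^ι when b = false. (This is the correctness of embedding an existing GM ciphertext of b into an AND-homomorphic ciphertext without decryption.) -/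
open scoped ENNReal

/-! For `b = true` every component is an encryption of `0`, so AND-decryption always returns `1`.
For `b = false` a component encrypts `1` exactly when `a i = false`, so decryption errs only on the
single outcome `a = fun _ => true`, which has probability `(1/2)^ι`. -/

namespace PMF

variable {α : Type*}

theorem toOuterMeasure_compl_add (p : PMF α) (s : Set α) :
    p.toOuterMeasure sᶜ + p.toOuterMeasure s = 1 := by
  simp only [toOuterMeasure_apply]
  rw [← ENNReal.tsum_add, ← p.tsum_coe]
  exact tsum_congr fun a => by by_cases h : a ∈ s <;> simp [h]

theorem toOuterMeasure_compl (p : PMF α) (s : Set α) :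
    p.toOuterMeasure sᶜ = 1 - p.toOuterMeasure s :=
  ENNReal.eq_sub_of_add_eq (p.toOuterMeasure_apply s ▸ p.tsum_coe_indicator_ne_top s)
    (p.toOuterMeasure_compl_add s)

theorem uniformOfFintype_boolFun_apply (ι : ℕ) (x : Fin ι → Bool) :
    uniformOfFintype (Fin ι → Bool) x = (1 / 2 : ℝ≥0∞) ^ ι := by
  simp [uniformOfFintype_apply, ENNReal.inv_pow]

end PMF

theorem andDecrypt_embed_true (ι : ℕ) (a : Fin ι → Bool) :
    decide (∀ i, (if a i then false else !true) = false) = true := by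
  simp

theorem andDecrypt_embed_false_iff (ι : ℕ) (a : Fin ι → Bool) :
    decide (∀ i, (if a i then false else !false) = false) = false ↔ a ≠ fun _ => true := by
  simp [funext_iff]

theorem and_embedding_correct_general
    (ι : ℕ) (b : Bool) :
    (1 - (1 / 2 : ℝ≥0∞) ^ ι ≤
      (PMF.uniformOfFintype (Fin ι → Bool)).toOuterMeasure
        {a | decide (∀ i, (if a i then false else !b) = false) = b}) ∧
    (b = true →
      (PMF.uniformOfFintype (Fin ι → Bool)).toOuterMeasure
        {a | decide (∀ i, (if a i then false else !b) = false) = b} = 1) ∧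
    (b = false →
      (PMF.uniformOfFintype (Fin ι → Bool)).toOuterMeasure
        {a | decide (∀ i, (if a i then false else !b) = false) = b} =
        1 - (1 / 2 : ℝ≥0∞) ^ ι) := by
  cases b with
  | true =>
    have hsure : (PMF.uniformOfFintype (Fin ι → Bool)).toOuterMeasure
        {a | decide (∀ i, (if a i then false else !true) = false) = true} = 1 :=
      (PMF.toOuterMeasure_apply_eq_one_iff _ _).2 fun a _ => andDecrypt_embed_true ι a
    exact ⟨hsure ▸ tsub_le_self, fun _ => hsure, nofun⟩
  | false =>
    have hset : {a : Fin ι → Bool |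
        decide (∀ i, (if a i then false else !false) = false) = false} = {fun _ => true}ᶜ :=
      Set.ext fun a => andDecrypt_embed_false_iff ι a
    have hfail : (PMF.uniformOfFintype (Fin ι → Bool)).toOuterMeasure
        {a | decide (∀ i, (if a i then false else !false) = false) = false} =
        1 - (1 / 2 : ℝ≥0∞) ^ ι := by
      rw [hset, PMF.toOuterMeasure_compl, PMF.toOuterMeasure_apply_singleton,
        PMF.uniformOfFintype_boolFun_apply]
    exact ⟨hfail.ge, nofun, fun _ => hfail⟩

/-- fix a bit `b`, sample `a : Fin ι → Bool` uniformly, and let the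
AND-embedding plaintext vector be `e i = false` if `a i = true` and `e i = ¬b`
otherwise. The probability that AND-decryption `(∀ i, e i = false)` equals `b`
is at least `1 − (1/2)^ι`; it is `1` if `b = true` and `1 − (1/2)^ι` if
`b = false`. -/
theorem and_embedding_correct
    (ι : ℕ) (hι : 1 ≤ ι) (b : Bool) :
    (1 - (1 / 2 : ℝ≥0∞) ^ ι ≤
      (PMF.uniformOfFintype (Fin ι → Bool)).toOuterMeasure
        {a | decide (∀ i, (if a i then false else !b) = false) = b}) ∧
    (b = true →
      (PMF.uniformOfFintype (Fin ι → Bool)).toOuterMeasure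
        {a | decide (∀ i, (if a i then false else !b) = false) = b} = 1) ∧
    (b = false →
      (PMF.uniformOfFintype (Fin ι → Bool)).toOuterMeasure
        {a | decide (∀ i, (if a i then false else !b) = false) = b} =
        1 - (1 / 2 : ℝ≥0∞) ^ ι) :=
  and_embedding_correct_general ι b
end
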